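/- arXiv:2308.04023 — 3 statements merged into one kernel-verified Lean document; each statement's English description precedes it below -/
import Mathlib

section
/- Let g1, g2 ∈ SL(d, ℝ) with singular value decompositions g1 = m1 a1 ℓ1 and g2 = m2 a2 ℓ2. Then σ1(g1)·σ1(g2)·sin(θ) ≤ σ1(g1 g2) ≤ σ1(g1)·σ1(g2), where σ1 denotes the largest singular value and θ is the Euclidean angle between the line m2⟨e1⟩ and the hyperplane ℓ1⁻¹⟨e2, …, e_d⟩. -/
/-! The operator norm is invariant under orthogonal factors on either side, so
`σ1(gᵢ) = aᵢ(1)` and `σ1(g1 g2) = ‖diag a1 · (ℓ1 m2) · diag a2‖`. An operator norm dominates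
every matrix entry, and the `(1,1)` entry of that product is `a1(1) a2(1) (ℓ1 m2)₁₁`, where
`(ℓ1 m2)₁₁ = ⟨m2 e1, ℓ1ᵀ e1⟩ = ± sin θ`. The upper bound is submultiplicativity of the
operator norm. -/

/-- The largest singular value of a real `d × d` matrix, i.e. its operator norm
as a map of Euclidean space. -/
noncomputable def sigma1 {d : ℕ} (A : Matrix (Fin d) (Fin d) ℝ) : ℝ :=
  ‖Matrix.toEuclideanCLM (𝕜 := ℝ) A‖

open Matrix
open scoped Matrix.Norms.L2Operator

namespace Matrix

variable {n : Type*} [Fintype n] [DecidableEq n]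

theorem mem_unitary_of_transpose_mul_self {m : Matrix n n ℝ} (hm : mᵀ * m = 1) :
    m ∈ unitary (Matrix n n ℝ) := by
  rw [← unitaryGroup, mem_unitaryGroup_iff', star_eq_conjTranspose,
    conjTranspose_eq_transpose_of_trivial]
  exact hm

theorem norm_apply_le_l2_opNorm {𝕜 : Type*} [RCLike 𝕜] (A : Matrix n n 𝕜) (i j : n) :
    ‖A i j‖ ≤ ‖A‖ := by
  set T := toEuclideanCLM (n := n) (𝕜 := 𝕜) A
  have hentry : A i j = inner 𝕜 (EuclideanSpace.single i 1) (T (EuclideanSpace.single j 1)) := by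
    simp [T, EuclideanSpace.inner_single_left, EuclideanSpace.single]
  calc ‖A i j‖ ≤ ‖EuclideanSpace.single i (1 : 𝕜)‖ * ‖T (EuclideanSpace.single j 1)‖ :=
        hentry ▸ norm_inner_le_norm _ _
    _ ≤ 1 * (‖T‖ * 1) := by
        gcongr
        · simp
        · simpa using T.le_opNorm (EuclideanSpace.single j 1)
    _ = ‖A‖ := by rw [one_mul, mul_one, cstar_norm_def]

theorem l2_opNorm_diagonal_eq_of_forall_abs_le {a : n → ℝ} {i₀ : n} (h : ∀ i, |a i| ≤ a i₀) :
    ‖diagonal a‖ = a i₀ := by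
  rw [l2_opNorm_diagonal]
  refine le_antisymm ?_ ?_
  · exact (pi_norm_le_iff_of_nonneg ((abs_nonneg _).trans (h i₀))).2 fun i ↦
      (Real.norm_eq_abs _).trans_le (h i)
  · exact (le_abs_self _).trans ((Real.norm_eq_abs _).symm.trans_le (norm_le_pi_norm a i₀))

theorem l2_opNorm_orthogonal_mul_mul_orthogonal {m l : Matrix n n ℝ} (hm : mᵀ * m = 1)
    (hl : lᵀ * l = 1) (A : Matrix n n ℝ) : ‖m * A * l‖ = ‖A‖ := by
  rw [CStarRing.norm_mul_mem_unitary _ (mem_unitary_of_transpose_mul_self hl),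
    CStarRing.norm_mem_unitary_mul _ (mem_unitary_of_transpose_mul_self hm)]

theorem abs_mul_abs_mul_abs_le_l2_opNorm (a b : n → ℝ) (B : Matrix n n ℝ) (i j : n) :
    |a i| * |B i j| * |b j| ≤ ‖diagonal a * B * diagonal b‖ := by
  simpa [abs_mul] using norm_apply_le_l2_opNorm (diagonal a * B * diagonal b) i j

theorem mulVec_single_one_dotProduct_transpose_mulVec_single_one (A B : Matrix n n ℝ) (i j : n) :
    A *ᵥ Pi.single j 1 ⬝ᵥ Bᵀ *ᵥ Pi.single i 1 = (B * A) i j := by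
  rw [dotProduct_comm, mulVec_transpose, ← dotProduct_mulVec, single_dotProduct, one_mul,
    mulVec_mulVec, mulVec_single_one, col_apply]

end Matrix

theorem sigma1_eq_l2_opNorm {d : ℕ} (A : Matrix (Fin d) (Fin d) ℝ) : sigma1 A = ‖A‖ := rfl

open Matrix in
theorem stmt0_general {d : ℕ} (hd : 0 < d)
    (g1 g2 m1 l1 m2 l2 : Matrix (Fin d) (Fin d) ℝ) (a1 a2 : Fin d → ℝ)
    (hm1 : m1ᵀ * m1 = 1) (hl1 : l1ᵀ * l1 = 1) (hm2 : m2ᵀ * m2 = 1) (hl2 : l2ᵀ * l2 = 1)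
    (ha1pos : ∀ i, 0 < a1 i) (ha1mono : ∀ i j : Fin d, i ≤ j → a1 j ≤ a1 i)
    (ha2pos : ∀ i, 0 < a2 i) (ha2mono : ∀ i j : Fin d, i ≤ j → a2 j ≤ a2 i)
    (hsvd1 : g1 = m1 * Matrix.diagonal a1 * l1)
    (hsvd2 : g2 = m2 * Matrix.diagonal a2 * l2)
    (sinθ : ℝ)
    (hsin : sinθ =
      |(m2.mulVec (Pi.single (⟨0, hd⟩ : Fin d) 1)) ⬝ᵥ (l1ᵀ.mulVec (Pi.single (⟨0, hd⟩ : Fin d) 1))|) :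
    sigma1 g1 * sigma1 g2 * sinθ ≤ sigma1 (g1 * g2) ∧
      sigma1 (g1 * g2) ≤ sigma1 g1 * sigma1 g2 := by
  have hmax : ∀ a : Fin d → ℝ, (∀ i, 0 < a i) → (∀ i j : Fin d, i ≤ j → a j ≤ a i) →
      ∀ i, |a i| ≤ a ⟨0, hd⟩ := fun a hpos hmono i ↦
    (abs_of_pos (hpos i)).trans_le (hmono _ i (Fin.mk_le_of_le_val (Nat.zero_le _)))
  have hσ1 : ‖g1‖ = a1 ⟨0, hd⟩ := by
    rw [hsvd1, l2_opNorm_orthogonal_mul_mul_orthogonal hm1 hl1,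
      l2_opNorm_diagonal_eq_of_forall_abs_le (hmax a1 ha1pos ha1mono)]
  have hσ2 : ‖g2‖ = a2 ⟨0, hd⟩ := by
    rw [hsvd2, l2_opNorm_orthogonal_mul_mul_orthogonal hm2 hl2,
      l2_opNorm_diagonal_eq_of_forall_abs_le (hmax a2 ha2pos ha2mono)]
  have hprod : g1 * g2 = m1 * (diagonal a1 * (l1 * m2) * diagonal a2) * l2 := by
    simp only [hsvd1, hsvd2, Matrix.mul_assoc]
  simp only [sigma1_eq_l2_opNorm]
  refine ⟨?_, norm_mul_le g1 g2⟩
  calc ‖g1‖ * ‖g2‖ * sinθ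
      = |a1 ⟨0, hd⟩| * |(l1 * m2) ⟨0, hd⟩ ⟨0, hd⟩| * |a2 ⟨0, hd⟩| := by
        rw [hσ1, hσ2, hsin, mulVec_single_one_dotProduct_transpose_mulVec_single_one,
          abs_of_pos (ha1pos _), abs_of_pos (ha2pos _)]
        ring
    _ ≤ ‖diagonal a1 * (l1 * m2) * diagonal a2‖ := abs_mul_abs_mul_abs_le_l2_opNorm _ _ _ _ _
    _ = ‖g1 * g2‖ := by rw [hprod, l2_opNorm_orthogonal_mul_mul_orthogonal hm1 hl2]

open Matrix in
/-- If `g1, g2 ∈ SL(d, ℝ)` have singular value decompositions `g1 = m1 a1 l1` and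
`g2 = m2 a2 l2` (with `m i, l i` orthogonal and `a i` diagonal with nonincreasing positive
entries), then `σ1(g1) σ1(g2) sin θ ≤ σ1(g1 g2) ≤ σ1(g1) σ1(g2)`, where `θ` is the Euclidean
angle between the line `m2⟨e1⟩` and the hyperplane `l1⁻¹⟨e2,…,e_d⟩`.  Since `m2·e1` and the
unit normal vector `l1ᵀ·e1` of that hyperplane are both unit vectors, the sine of that
angle is `sin θ = |⟨m2 e1, l1ᵀ e1⟩|`. -/
theorem stmt0 {d : ℕ} (hd : 0 < d)
    (g1 g2 m1 l1 m2 l2 : Matrix (Fin d) (Fin d) ℝ) (a1 a2 : Fin d → ℝ)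
    (hg1det : g1.det = 1) (hg2det : g2.det = 1)
    (hm1 : m1ᵀ * m1 = 1) (hl1 : l1ᵀ * l1 = 1) (hm2 : m2ᵀ * m2 = 1) (hl2 : l2ᵀ * l2 = 1)
    (ha1pos : ∀ i, 0 < a1 i) (ha1mono : ∀ i j : Fin d, i ≤ j → a1 j ≤ a1 i)
    (ha2pos : ∀ i, 0 < a2 i) (ha2mono : ∀ i j : Fin d, i ≤ j → a2 j ≤ a2 i)
    (hsvd1 : g1 = m1 * Matrix.diagonal a1 * l1)
    (hsvd2 : g2 = m2 * Matrix.diagonal a2 * l2)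
    (sinθ : ℝ)
    (hsin : sinθ =
      |(m2.mulVec (Pi.single (⟨0, hd⟩ : Fin d) 1)) ⬝ᵥ (l1ᵀ.mulVec (Pi.single (⟨0, hd⟩ : Fin d) 1))|) :
    sigma1 g1 * sigma1 g2 * sinθ ≤ sigma1 (g1 * g2) ∧
      sigma1 (g1 * g2) ≤ sigma1 g1 * sigma1 g2 :=
  stmt0_general hd g1 g2 m1 l1 m2 l2 a1 a2 hm1 hl1 hm2 hl2 ha1pos ha1mono ha2pos ha2mono hsvd1 hsvd2
    sinθ hsin
end

section
/- Let Γ be a group and φ : Γ → ℝ a function with φ(γ⁻¹) = φ(γ) for all γ. Suppose γ ∈ Γ has infinite order and there is C ≥ 0 such that φ(γ^{n+m}) ≥ φ(γ^n) + φ(γ^m) − C for all n, m ≥ 1. If moreover φ(γ^n) → +∞ as n → ∞, then the critical exponent of the series s ↦ Σ_{n ∈ ℤ} e^{-s φ(γ^n)} is 0, i.e. the series converges for every s > 0. -/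
/-!
Write `u n = φ(γ^n)`. Once `u N > C` for some `N ≥ 1` (which `u → ∞` provides), iterating the
quasi-superadditivity gives `u (k N + r) ≥ u r + k (u N - C)`, so `u` grows at least linearly.
Hence `e^{-s u n}` is dominated by a geometric series on `ℕ`, and by symmetry of `φ` the terms
with `n < 0` repeat those with `n > 0`.
-/

open Filter Real

theorem add_mul_sub_le_of_quasiSuperadditive {u : ℕ → ℝ} {C : ℝ}
    (hsuper : ∀ n m : ℕ, 1 ≤ n → 1 ≤ m → u (n + m) ≥ u n + u m - C)
    {N r : ℕ} (hN : 1 ≤ N) (hr : 1 ≤ r) (k : ℕ) :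
    u r + k * (u N - C) ≤ u (k * N + r) := by
  induction k with
  | zero => simp
  | succ k ih =>
    have hstep := hsuper (k * N + r) N (by omega) hN
    rw [show (k + 1) * N + r = k * N + r + N by ring]
    push_cast
    linarith

theorem exists_linear_lower_bound_of_quasiSuperadditive {u : ℕ → ℝ} {C : ℝ}
    (hsuper : ∀ n m : ℕ, 1 ≤ n → 1 ≤ m → u (n + m) ≥ u n + u m - C)
    {N : ℕ} (hN : 1 ≤ N) (hNC : C < u N) :
    ∃ a > 0, ∃ b, ∀ n ≥ 1, a * n - b ≤ u n := by
  obtain ⟨m, hm⟩ := ((Set.finite_Icc 1 N).image u).bddBelow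
  have hNpos : (0 : ℝ) < N := by exact_mod_cast hN
  refine ⟨(u N - C) / N, div_pos (sub_pos.2 hNC) hNpos, u N - C - m, fun n hn => ?_⟩
  obtain ⟨k, r, hr1, hr, hn_eq⟩ : ∃ k r, 1 ≤ r ∧ r ≤ N ∧ n = k * N + r := by
    refine ⟨(n - 1) / N, (n - 1) % N + 1, by omega, Nat.mod_lt _ (by omega), ?_⟩
    have := Nat.div_add_mod (n - 1) N
    rw [mul_comm] at this
    omega
  have hmr : m ≤ u r := hm ⟨r, Set.mem_Icc.2 ⟨by omega, hr⟩, rfl⟩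
  have hkN : (n : ℝ) - N ≤ k * N := by
    rw [hn_eq]
    push_cast
    linarith [(Nat.cast_le (α := ℝ)).2 hr]
  have hlin : (u N - C) / N * n - (u N - C - m) ≤ m + k * (u N - C) := by
    rw [div_mul_eq_mul_div, div_sub' hNpos.ne', div_le_iff₀ hNpos]
    nlinarith
  have hiter := add_mul_sub_le_of_quasiSuperadditive hsuper hN hr1 k
  rw [← hn_eq] at hiter
  linarith

theorem summable_exp_neg_mul_of_linear_lower_bound {u : ℕ → ℝ} {a b s : ℝ}
    (ha : 0 < a) (hs : 0 < s) (hu : ∀ᶠ n in atTop, a * n - b ≤ u n) :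
    Summable fun n => exp (-s * u n) := by
  have hgeo : Summable fun n : ℕ => exp (s * b) * exp (-(s * a)) ^ n :=
    (summable_geometric_of_lt_one (exp_nonneg _)
      (exp_lt_one_iff.2 (neg_neg_of_pos (mul_pos hs ha)))).mul_left _
  refine hgeo.of_norm_bounded_eventually ?_
  rw [Nat.cofinite_eq_atTop]
  filter_upwards [hu] with n hn
  rw [norm_of_nonneg (exp_nonneg _), ← exp_nat_mul, ← exp_add, exp_le_exp]
  nlinarith

theorem stmt11_general {Γ : Type*} [Group Γ] (φ : Γ → ℝ)
    (hsym : ∀ γ : Γ, φ γ⁻¹ = φ γ)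
    (γ : Γ)
    (C : ℝ)
    (hsuper : ∀ n m : ℕ, 1 ≤ n → 1 ≤ m → φ (γ ^ (n + m)) ≥ φ (γ ^ n) + φ (γ ^ m) - C)
    (htend : Filter.Tendsto (fun n : ℕ => φ (γ ^ n)) Filter.atTop Filter.atTop) :
    ∀ s : ℝ, 0 < s → (∑' n : ℤ, ENNReal.ofReal (Real.exp (-s * φ (γ ^ n)))) < ⊤ := by
  intro s hs
  obtain ⟨N, hNC, hN⟩ := ((htend.eventually_gt_atTop C).and (eventually_ge_atTop 1)).exists
  obtain ⟨a, ha, b, hlin⟩ :=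
    exists_linear_lower_bound_of_quasiSuperadditive (u := fun n => φ (γ ^ n)) hsuper hN hNC
  have hnat : Summable fun n : ℕ => exp (-s * φ (γ ^ n)) :=
    summable_exp_neg_mul_of_linear_lower_bound ha hs (eventually_atTop.2 ⟨1, hlin⟩)
  have hint : Summable fun n : ℤ => exp (-s * φ (γ ^ n)) :=
    .of_nat_of_neg (by simpa using hnat) (by simpa [zpow_neg, hsym] using hnat)
  rw [← ENNReal.ofReal_tsum_of_nonneg (fun n => (exp_pos _).le) hint]
  exact ENNReal.ofReal_lt_top

/-- If `φ : Γ → ℝ` is symmetric (`φ(γ⁻¹) = φ(γ)`), `γ` has infinite order,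
`φ(γ^{n+m}) ≥ φ(γ^n) + φ(γ^m) − C` for all `n, m ≥ 1`, and `φ(γ^n) → +∞`, then the
series `Σ_{n ∈ ℤ} e^{-s φ(γ^n)}` converges for every `s > 0` (i.e. its critical exponent
is `0`). -/
theorem stmt11 {Γ : Type*} [Group Γ] (φ : Γ → ℝ)
    (hsym : ∀ γ : Γ, φ γ⁻¹ = φ γ)
    (γ : Γ) (hord : ¬ IsOfFinOrder γ)
    (C : ℝ) (hC : 0 ≤ C)
    (hsuper : ∀ n m : ℕ, 1 ≤ n → 1 ≤ m → φ (γ ^ (n + m)) ≥ φ (γ ^ n) + φ (γ ^ m) - C)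
    (htend : Filter.Tendsto (fun n : ℕ => φ (γ ^ n)) Filter.atTop Filter.atTop) :
    ∀ s : ℝ, 0 < s → (∑' n : ℤ, ENNReal.ofReal (Real.exp (-s * φ (γ ^ n)))) < ⊤ :=
  stmt11_general φ hsym γ C hsuper htend
end

section
/- Let Q : f ↦ Σ_{γ ∈ Γ} h(e^{f(γ)}) e^{-s f(γ)} where Γ is countable, f : Γ → [0, ∞) is proper (i.e. {γ : f(γ) ≤ T} is finite for every T), and suppose the critical exponent δ of s ↦ Σ_γ e^{-s f(γ)} is finite. Then (Patterson's lemma) there exists a continuous nondecreasing function h : (0,∞) → (0,∞) such that: (a) the series Σ_{γ} h(e^{f(γ)}) e^{-s f(γ)} converges for s > δ and diverges for s ≤ δ; and (b) for every ε > 0 there exists ν0 > 0 such that h(ν t) ≤ t^ε h(ν) whenever t > 1 and ν > ν0. -/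
open scoped ENNReal

open Set Filter Topology Real MeasureTheory

/-!
Take slopes `εₙ = δ / (n + 1) ↓ 0`. Since `Σ e^{-(δ - εₙ) f}` diverges for each `n` (when
`δ = 0` because `Γ` is infinite) and `f` is proper, one can cut `ℝ` into consecutive intervals
`(Tₙ, Tₙ₊₁]` so that the part of the series at exponent `δ - εₙ₊₁` with `f γ ∈ (Tₙ, Tₙ₊₁]` is at
least `1`. The step function `φ = εₙ₊₁` on `(Tₙ, Tₙ₊₁]` is antitone, tends to `0`, and
`Σ e^{-(δ - φ (f γ)) f γ} = ∞`.
Put `h ν = exp ∫₀^{log ν} φ`. As `φ` is antitone, `u φ u ≤ log h (eᵘ)` (divergence at `δ`) and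
`log h (e^{u+v}) - log h (eᵘ) ≤ v φ u`; with `φ → 0` the latter gives both `h (ν t) ≤ t^ε h ν`
for large `ν` and `log h (eᵘ) ≤ C + η u` for every `η > 0` (convergence for `s > δ`).
-/

section primitive

variable {φ : ℝ → ℝ} {a b : ℝ}

lemma Antitone.mul_sub_le_integral (hφ : Antitone φ) (hab : a ≤ b) :
    φ b * (b - a) ≤ ∫ x in a..b, φ x := by
  calc φ b * (b - a) = ∫ _ in a..b, φ b := by simp [mul_comm]
    _ ≤ ∫ x in a..b, φ x := intervalIntegral.integral_mono_on hab intervalIntegrable_const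
        hφ.intervalIntegrable fun x hx => hφ hx.2

lemma Antitone.integral_le_mul_sub (hφ : Antitone φ) (hab : a ≤ b) :
    ∫ x in a..b, φ x ≤ φ a * (b - a) := by
  calc ∫ x in a..b, φ x ≤ ∫ _ in a..b, φ a := intervalIntegral.integral_mono_on hab
        hφ.intervalIntegrable intervalIntegrable_const fun x hx => hφ hx.1
    _ = φ a * (b - a) := by simp [mul_comm]

lemma Antitone.primitive_sub_primitive (hφ : Antitone φ) (a b : ℝ) :
    (∫ x in (0)..b, φ x) - ∫ x in (0)..a, φ x = ∫ x in a..b, φ x :=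
  intervalIntegral.integral_interval_sub_left (μ := volume) hφ.intervalIntegrable
    hφ.intervalIntegrable

lemma Antitone.monotone_primitive (hφ : Antitone φ) (hφ0 : ∀ x, 0 ≤ φ x) :
    Monotone fun u => ∫ x in (0)..u, φ x := fun a b hab => by
  show ∫ x in (0)..a, φ x ≤ ∫ x in (0)..b, φ x
  have := hφ.mul_sub_le_integral hab
  rw [← hφ.primitive_sub_primitive] at this
  linarith [mul_nonneg (hφ0 b) (sub_nonneg.2 hab)]

end primitive

namespace Patterson

/-- `blockIndex T x = n + 1` exactly when `x ∈ (T n, T (n + 1)]`, for `T` monotone and unbounded. -/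
noncomputable def blockIndex (T : ℕ → ℝ) (x : ℝ) : ℕ := sInf {n | x ≤ T n}

section blockIndex

variable {T : ℕ → ℝ} {x : ℝ} {n : ℕ}

lemma le_apply_blockIndex (hT : Tendsto T atTop atTop) (x : ℝ) : x ≤ T (blockIndex T x) :=
  Nat.sInf_mem (hT.eventually_ge_atTop x).exists

lemma blockIndex_le (h : x ≤ T n) : blockIndex T x ≤ n :=
  Nat.sInf_le h

lemma lt_blockIndex (hT : Monotone T) (hT' : Tendsto T atTop atTop) (h : T n < x) :
    n < blockIndex T x := by
  by_contra! hle
  exact ((le_apply_blockIndex hT' x).trans (hT hle)).not_gt h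

lemma blockIndex_mono (hT : Tendsto T atTop atTop) : Monotone (blockIndex T) :=
  fun _ y hxy => blockIndex_le (hxy.trans (le_apply_blockIndex hT y))

lemma blockIndex_eq_succ (hT : Monotone T) (hT' : Tendsto T atTop atTop)
    (h : x ∈ Ioc (T n) (T (n + 1))) : blockIndex T x = n + 1 :=
  le_antisymm (blockIndex_le h.2) (lt_blockIndex hT hT' h.1)

lemma tendsto_blockIndex (hT : Monotone T) (hT' : Tendsto T atTop atTop) :
    Tendsto (blockIndex T) atTop atTop :=
  tendsto_atTop_atTop.2 fun n => ⟨T n + 1, fun _ hx => (lt_blockIndex hT hT' (by linarith)).le⟩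

end blockIndex

section blocks

variable {Γ : Type*} {f : Γ → ℝ}

lemma exists_one_le_tsum_preimage_Ioc (hf : ∀ t, {γ | f γ ≤ t}.Finite) {a : Γ → ℝ≥0∞}
    (ha : ∀ γ, a γ ≠ ∞) (hsum : ∑' γ, a γ = ∞) (t : ℝ) :
    ∃ t', t + 1 ≤ t' ∧ 1 ≤ ∑' γ : f ⁻¹' Ioc t t', a γ := by
  have hfin : ∑' γ : f ⁻¹' Iic t, a γ ≠ ∞ := by
    have : Finite (f ⁻¹' Iic t) := (hf t).to_subtype
    have := Fintype.ofFinite (f ⁻¹' Iic t)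
    rw [tsum_fintype]
    exact ENNReal.sum_ne_top.2 fun γ _ => ha γ
  obtain ⟨F, hF⟩ : ∃ F : Finset Γ, ∑' γ : f ⁻¹' Iic t, a γ + 1 < ∑ γ ∈ F, a γ := by
    rw [← lt_iSup_iff, ← ENNReal.tsum_eq_iSup_sum, hsum]
    exact ENNReal.add_lt_top.2 ⟨hfin.lt_top, ENNReal.one_lt_top⟩
  obtain ⟨M, hM⟩ := (F.image f).exists_le
  set t' := max (t + 1) M
  have hF_sub : (F : Set Γ) ⊆ f ⁻¹' Iic t' :=
    fun γ hγ => (hM _ (Finset.mem_image_of_mem f hγ)).trans (le_max_right _ _)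
  refine ⟨t', le_max_left _ _, le_of_lt <| (ENNReal.add_lt_add_iff_left hfin).1 ?_⟩
  calc ∑' γ : f ⁻¹' Iic t, a γ + 1 < ∑ γ ∈ F, a γ := hF
    _ = ∑' γ : (F : Set Γ), a γ := (F.tsum_subtype a).symm
    _ ≤ ∑' γ : f ⁻¹' Iic t', a γ := ENNReal.tsum_mono_subtype a hF_sub
    _ ≤ ∑' γ : f ⁻¹' Iic t, a γ + ∑' γ : f ⁻¹' Ioc t t', a γ := by
      rw [← Iic_union_Ioc_eq_Iic (by linarith [le_max_left (t + 1) M] : t ≤ t'), preimage_union]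
      exact ENNReal.tsum_union_le a _ _

theorem exists_tsum_comp_blockIndex_eq_top (hf : ∀ t, {γ | f γ ≤ t}.Finite)
    {w : ℕ → Γ → ℝ≥0∞} (hw : ∀ n γ, w n γ ≠ ∞) (hsum : ∀ n, ∑' γ, w n γ = ∞) :
    ∃ T : ℕ → ℝ, Monotone T ∧ Tendsto T atTop atTop ∧
      ∑' γ, w (blockIndex T (f γ)) γ = ∞ := by
  choose next hnext_ge hnext using
    fun n => exists_one_le_tsum_preimage_Ioc hf (hw (n + 1)) (hsum (n + 1))
  let T : ℕ → ℝ := fun n => Nat.rec 0 next n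
  have hstep (n : ℕ) : T n + 1 ≤ T (n + 1) := hnext_ge n (T n)
  have hT : Monotone T := monotone_nat_of_le_succ fun n => by linarith [hstep n]
  have hT_ge (n : ℕ) : (n : ℝ) ≤ T n := by
    induction n with
    | zero => exact Nat.cast_zero.le
    | succ n ih => push_cast; linarith [hstep n]
  have hT' : Tendsto T atTop atTop := tendsto_atTop_mono hT_ge tendsto_natCast_atTop_atTop
  refine ⟨T, hT, hT', top_unique ?_⟩
  set k : Γ → ℕ := fun γ => blockIndex T (f γ)
  have hblock (n : ℕ) : 1 ≤ ∑' γ : k ⁻¹' {n + 1}, w (k γ) γ :=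
    calc 1 ≤ ∑' γ : f ⁻¹' Ioc (T n) (T (n + 1)), w (n + 1) γ := hnext n (T n)
      _ = ∑' γ : f ⁻¹' Ioc (T n) (T (n + 1)), w (k γ) γ :=
        tsum_congr fun γ => by rw [show k γ = n + 1 from blockIndex_eq_succ hT hT' γ.2]
      _ ≤ ∑' γ : k ⁻¹' {n + 1}, w (k γ) γ :=
        ENNReal.tsum_mono_subtype (fun γ => w (k γ) γ) fun γ hγ =>
          show k γ = n + 1 from blockIndex_eq_succ hT hT' hγ
  calc ∞ = ∑' _ : ℕ, (1 : ℝ≥0∞) := (ENNReal.tsum_const_eq_top_of_ne_zero one_ne_zero).symm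
    _ ≤ ∑' n, ∑' γ : k ⁻¹' {n + 1}, w (k γ) γ := ENNReal.tsum_le_tsum hblock
    _ ≤ ∑' m, ∑' γ : k ⁻¹' {m}, w (k γ) γ :=
      ENNReal.tsum_comp_le_tsum_of_injective (add_left_injective 1) _
    _ = ∑' γ, w (k γ) γ := ENNReal.tsum_fiberwise (fun γ => w (k γ) γ) k

end blocks

theorem exists_antitone_tendsto_zero_tsum_eq_top {Γ : Type*} {f : Γ → ℝ}
    (hf : ∀ t, {γ | f γ ≤ t}.Finite) {δ : ℝ} {ε : ℕ → ℝ} (hε : Antitone ε)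
    (hε0 : ∀ n, 0 ≤ ε n) (hε_lim : Tendsto ε atTop (𝓝 0))
    (hdiv : ∀ n, ∑' γ, ENNReal.ofReal (exp (-(δ - ε n) * f γ)) = ∞) :
    ∃ φ : ℝ → ℝ, Antitone φ ∧ (∀ x, 0 ≤ φ x) ∧ Tendsto φ atTop (𝓝 0) ∧
      ∑' γ, ENNReal.ofReal (exp (-(δ - φ (f γ)) * f γ)) = ∞ := by
  obtain ⟨T, hT, hT', hsum⟩ := exists_tsum_comp_blockIndex_eq_top hf
    (w := fun n γ => ENNReal.ofReal (exp (-(δ - ε n) * f γ))) (fun _ _ => ENNReal.ofReal_ne_top)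
    hdiv
  exact ⟨fun x => ε (blockIndex T x), hε.comp_monotone (blockIndex_mono hT'), fun _ => hε0 _,
    hε_lim.comp (tendsto_blockIndex hT hT'), hsum⟩

noncomputable def weight (φ : ℝ → ℝ) (ν : ℝ) : ℝ := exp (∫ x in (0)..log ν, φ x)

section weight

variable {φ : ℝ → ℝ}

lemma continuousOn_weight (hφ : Antitone φ) : ContinuousOn (weight φ) (Ioi 0) :=
  (continuous_exp.comp (intervalIntegral.continuous_primitive
    (fun _ _ => hφ.intervalIntegrable) 0)).comp_continuousOn
    (continuousOn_log.mono fun _ hx => ne_of_gt hx)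

lemma monotoneOn_weight (hφ : Antitone φ) (hφ0 : ∀ x, 0 ≤ φ x) :
    MonotoneOn (weight φ) (Ioi 0) := fun _ hx _ _ hxy =>
  exp_le_exp.2 (hφ.monotone_primitive hφ0 (log_le_log hx hxy))

lemma weight_mul_le (hφ : Antitone φ) {ν t : ℝ} (hν : 0 < ν) (ht : 1 ≤ t) :
    weight φ (ν * t) ≤ t ^ φ (log ν) * weight φ ν := by
  have hlog_t : 0 ≤ log t := log_nonneg ht
  have := hφ.integral_le_mul_sub (le_add_of_nonneg_right hlog_t : log ν ≤ log ν + log t)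
  rw [← hφ.primitive_sub_primitive, add_sub_cancel_left] at this
  rw [weight, weight, log_mul hν.ne' (by positivity), rpow_def_of_pos (by positivity),
    ← exp_add, exp_le_exp]
  linarith

lemma exists_weight_mul_le (hφ : Antitone φ) (hφ_lim : Tendsto φ atTop (𝓝 0)) {ε : ℝ}
    (hε : 0 < ε) : ∃ ν0 : ℝ, 0 < ν0 ∧
      ∀ ν t : ℝ, 1 < t → ν0 < ν → weight φ (ν * t) ≤ t ^ ε * weight φ ν := by
  obtain ⟨U, hU⟩ := ((tendsto_order.1 hφ_lim).2 ε hε).exists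
  refine ⟨exp U, exp_pos U, fun ν t ht hν => ?_⟩
  have hν0 : 0 < ν := (exp_pos U).trans hν
  have hUν : U ≤ log ν := (lt_log_iff_exp_lt hν0).2 hν |>.le
  calc weight φ (ν * t) ≤ t ^ φ (log ν) * weight φ ν := weight_mul_le hφ hν0 ht.le
    _ ≤ t ^ ε * weight φ ν :=
        mul_le_mul_of_nonneg_right
          (rpow_le_rpow_of_exponent_le ht.le ((hφ hUν).trans hU.le)) (exp_pos _).le

lemma weight_exp_le (hφ : Antitone φ) (hφ0 : ∀ x, 0 ≤ φ x) {U η u : ℝ} (hU : 0 ≤ U)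
    (hη : φ U ≤ η) (hu : 0 ≤ u) :
    weight φ (exp u) ≤ exp (∫ x in (0)..U, φ x) * exp (η * u) := by
  rw [weight, log_exp, ← exp_add, exp_le_exp]
  have hη0 : 0 ≤ η := (hφ0 U).trans hη
  rcases le_total u U with huU | hUu
  · linarith [hφ.monotone_primitive hφ0 huU, mul_nonneg hη0 hu]
  · have := hφ.integral_le_mul_sub hUu
    rw [← hφ.primitive_sub_primitive] at this
    nlinarith [mul_le_mul_of_nonneg_right hη (sub_nonneg.2 hUu)]

lemma exp_mul_le_weight_exp (hφ : Antitone φ) {u : ℝ} (hu : 0 ≤ u) :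
    exp (φ u * u) ≤ weight φ (exp u) := by
  rw [weight, log_exp, exp_le_exp]
  simpa using hφ.mul_sub_le_integral hu

variable {Γ : Type*} {f : Γ → ℝ}

lemma tsum_weight_lt_top (hf0 : ∀ γ, 0 ≤ f γ) (hφ : Antitone φ) (hφ0 : ∀ x, 0 ≤ φ x)
    (hφ_lim : Tendsto φ atTop (𝓝 0)) {r s : ℝ}
    (hconv : ∑' γ, ENNReal.ofReal (exp (-r * f γ)) < ∞) (hrs : r < s) :
    ∑' γ, ENNReal.ofReal (weight φ (exp (f γ)) * exp (-s * f γ)) < ∞ := by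
  obtain ⟨U, hU⟩ := ((tendsto_order.1 hφ_lim).2 (s - r) (by linarith)).exists_forall_of_atTop
  set C := exp (∫ x in (0)..max U 0, φ x)
  have hterm (γ : Γ) : weight φ (exp (f γ)) * exp (-s * f γ) ≤ C * exp (-r * f γ) :=
    calc weight φ (exp (f γ)) * exp (-s * f γ)
        ≤ C * exp ((s - r) * f γ) * exp (-s * f γ) :=
          mul_le_mul_of_nonneg_right
            (weight_exp_le hφ hφ0 (le_max_right U 0) (hU _ (le_max_left U 0)).le (hf0 γ))
            (exp_pos _).le
      _ = C * exp (-r * f γ) := by rw [mul_assoc, ← exp_add]; ring_nf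
  calc ∑' γ, ENNReal.ofReal (weight φ (exp (f γ)) * exp (-s * f γ))
      ≤ ∑' γ, ENNReal.ofReal C * ENNReal.ofReal (exp (-r * f γ)) :=
        ENNReal.tsum_le_tsum fun γ => by
          rw [← ENNReal.ofReal_mul (exp_pos _).le]
          exact ENNReal.ofReal_le_ofReal (hterm γ)
    _ = ENNReal.ofReal C * ∑' γ, ENNReal.ofReal (exp (-r * f γ)) := ENNReal.tsum_mul_left
    _ < ∞ := ENNReal.mul_lt_top ENNReal.ofReal_lt_top hconv

lemma tsum_weight_eq_top (hf0 : ∀ γ, 0 ≤ f γ) (hφ : Antitone φ) {δ s : ℝ} (hs : s ≤ δ)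
    (hdiv : ∑' γ, ENNReal.ofReal (exp (-(δ - φ (f γ)) * f γ)) = ∞) :
    ∑' γ, ENNReal.ofReal (weight φ (exp (f γ)) * exp (-s * f γ)) = ∞ := by
  refine top_unique (hdiv ▸ ENNReal.tsum_le_tsum fun γ => ENNReal.ofReal_le_ofReal ?_)
  calc exp (-(δ - φ (f γ)) * f γ) = exp (φ (f γ) * f γ) * exp (-δ * f γ) := by
        rw [← exp_add]; ring_nf
    _ ≤ weight φ (exp (f γ)) * exp (-s * f γ) :=
        mul_le_mul (exp_mul_le_weight_exp hφ (hf0 γ)) (exp_le_exp.2 (by nlinarith [hf0 γ]))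
          (exp_pos _).le (exp_pos _).le

end weight

end Patterson

open Patterson

theorem stmt13_general {Γ : Type*} [Infinite Γ] (f : Γ → ℝ)
    (hf0 : ∀ γ, 0 ≤ f γ) (hproper : ∀ T : ℝ, {γ : Γ | f γ ≤ T}.Finite)
    (δ : ℝ) (hδ0 : 0 ≤ δ)
    (hconv : ∀ s : ℝ, δ < s → (∑' γ : Γ, ENNReal.ofReal (Real.exp (-s * f γ))) < ⊤)
    (hdiv : ∀ s : ℝ, 0 ≤ s → s < δ →
      (∑' γ : Γ, ENNReal.ofReal (Real.exp (-s * f γ))) = ⊤) :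
    ∃ h : ℝ → ℝ, ContinuousOn h (Set.Ioi 0) ∧ MonotoneOn h (Set.Ioi 0) ∧
      (∀ ν : ℝ, 0 < ν → 0 < h ν) ∧
      (∀ s : ℝ, δ < s →
        (∑' γ : Γ, ENNReal.ofReal (h (Real.exp (f γ)) * Real.exp (-s * f γ))) < ⊤) ∧
      (∀ s : ℝ, s ≤ δ →
        (∑' γ : Γ, ENNReal.ofReal (h (Real.exp (f γ)) * Real.exp (-s * f γ))) = ⊤) ∧
      (∀ ε : ℝ, 0 < ε → ∃ ν0 : ℝ, 0 < ν0 ∧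
        ∀ ν t : ℝ, 1 < t → ν0 < ν → h (ν * t) ≤ t ^ ε * h ν) := by
  have hdiv_slopes (n : ℕ) :
      ∑' γ, ENNReal.ofReal (exp (-(δ - δ / (n + 1)) * f γ)) = ∞ := by
    rcases hδ0.eq_or_lt with rfl | hδ
    · simp
    · exact hdiv _ (sub_nonneg.2 (div_le_self hδ0 (by linarith [n.cast_nonneg (α := ℝ)])))
        (sub_lt_self _ (by positivity))
  obtain ⟨φ, hφ, hφ0, hφ_lim, hφ_div⟩ := exists_antitone_tendsto_zero_tsum_eq_top hproper
    (fun m n hmn => by gcongr) (fun n => by positivity)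
    (by simpa only [mul_one_div, mul_zero] using
      tendsto_one_div_add_atTop_nhds_zero_nat.const_mul δ)
    hdiv_slopes
  exact ⟨weight φ, continuousOn_weight hφ, monotoneOn_weight hφ hφ0, fun _ _ => exp_pos _,
    fun s hs => tsum_weight_lt_top hf0 hφ hφ0 hφ_lim (hconv ((δ + s) / 2) (by linarith))
      (by linarith),
    fun _ hs => tsum_weight_eq_top hf0 hφ hs hφ_div,
    fun _ hε => exists_weight_mul_le hφ hφ_lim hε⟩

/-- Patterson's lemma: if `f : Γ → [0,∞)` is proper on the countable (infinite) set `Γ` and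
the series `Σ_γ e^{-s f(γ)}` has finite critical exponent `δ`, then there is a continuous
nondecreasing positive function `h` on `(0, ∞)` such that the weighted series
`Σ_γ h(e^{f(γ)}) e^{-s f(γ)}` converges for `s > δ` and diverges for `s ≤ δ`, and for every
`ε > 0` there is `ν₀ > 0` with `h(ν t) ≤ t^ε h(ν)` whenever `t > 1` and `ν > ν₀`. -/
theorem stmt13 {Γ : Type*} [Countable Γ] [Infinite Γ] (f : Γ → ℝ)
    (hf0 : ∀ γ, 0 ≤ f γ) (hproper : ∀ T : ℝ, {γ : Γ | f γ ≤ T}.Finite)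
    (δ : ℝ) (hδ0 : 0 ≤ δ)
    (hconv : ∀ s : ℝ, δ < s → (∑' γ : Γ, ENNReal.ofReal (Real.exp (-s * f γ))) < ⊤)
    (hdiv : ∀ s : ℝ, 0 ≤ s → s < δ →
      (∑' γ : Γ, ENNReal.ofReal (Real.exp (-s * f γ))) = ⊤) :
    ∃ h : ℝ → ℝ, ContinuousOn h (Set.Ioi 0) ∧ MonotoneOn h (Set.Ioi 0) ∧
      (∀ ν : ℝ, 0 < ν → 0 < h ν) ∧
      (∀ s : ℝ, δ < s →
        (∑' γ : Γ, ENNReal.ofReal (h (Real.exp (f γ)) * Real.exp (-s * f γ))) < ⊤) ∧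
      (∀ s : ℝ, s ≤ δ →
        (∑' γ : Γ, ENNReal.ofReal (h (Real.exp (f γ)) * Real.exp (-s * f γ))) = ⊤) ∧
      (∀ ε : ℝ, 0 < ε → ∃ ν0 : ℝ, 0 < ν0 ∧
        ∀ ν t : ℝ, 1 < t → ν0 < ν → h (ν * t) ≤ t ^ ε * h ν) :=
  stmt13_general f hf0 hproper δ hδ0 hconv hdiv
end
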